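/- arXiv:cond-mat/0612697 — 3 statements merged into one kernel-verified Lean document; each statement's English description precedes it below -/
import Mathlib

section
/- For probability vectors p, q on a finite set of size m, with β ∈ (0,1), c ∈ ℝ such that q_i + βc·p_i ≥ 0 for all i, the Pólya divergence I(p‖q;β,c) := I(p‖q+βcp) + (1/(βc))·I(q‖q+βcp) + ((1+βc)/(βc))·log(1+βc) is non-negative, with equality if and only if p = q. -/
open Real Finset Filter Topology

/-- Kullback-Leibler divergence of finite vectors (with `Real.log` conventions). -/
noncomputable def KL {m : ℕ} (a b : Fin m → ℝ) : ℝ :=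
  ∑ i, a i * Real.log (a i / b i)

/-- The Pólya divergence `I(p‖q; β, c)`. -/
noncomputable def polyaDiv {m : ℕ} (p q : Fin m → ℝ) (β c : ℝ) : ℝ :=
  KL p (fun i => q i + β * c * p i)
    + (1 / (β * c)) * KL q (fun i => q i + β * c * p i)
    + ((1 + β * c) / (β * c)) * Real.log (1 + β * c)

/-- The probability simplex on `m` points. -/
def probSimplex (m : ℕ) : Set (Fin m → ℝ) :=
  {p | (∀ i, 0 ≤ p i) ∧ ∑ i, p i = 1}

/-! With `t = βc` and `sᵢ = qᵢ + t pᵢ`, so that `∑ᵢ sᵢ = 1 + t`, the divergence is `∑ᵢ gᵢ / t` for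
`gᵢ = t pᵢ log (pᵢ / sᵢ) + qᵢ log (qᵢ / sᵢ) + sᵢ log (1 + t)`. Each `gᵢ / t` is nonnegative by
Gibbs' inequality `a log (a / x) ≥ a - x`: for `t > 0`, `gᵢ = t pᵢ log (pᵢ / rᵢ) + qᵢ log (qᵢ / rᵢ)`
with `rᵢ = sᵢ / (1 + t)`, and for `t < 0`, `-gᵢ = -t pᵢ log (pᵢ / qᵢ) + sᵢ log (sᵢ / ((1 + t) qᵢ))`;
in both cases the linear lower bounds cancel, and the first one is strict unless `pᵢ = qᵢ`.
Where `sᵢ = 0` the term vanishes (`log 0 = 0` in Lean) but `qᵢ = -t pᵢ ≤ pᵢ`, so a vanishing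
divergence still forces `q ≤ p`, hence `p = q`. -/

lemma mul_log_div (a : ℝ) {x : ℝ} (hx : x ≠ 0) : a * log (a / x) = a * log a - a * log x := by
  rcases eq_or_ne a 0 with rfl | ha
  · simp
  · rw [log_div ha hx]; ring

lemma sub_le_mul_log_div {a x : ℝ} (ha : 0 ≤ a) (hx : 0 < x) : a - x ≤ a * log (a / x) :=
  calc a - x = x * (a / x - 1) := by field_simp
    _ ≤ x * (a / x * log (a / x)) :=
      mul_le_mul_of_nonneg_left (self_sub_one_le_mul_log (div_nonneg ha hx.le)) hx.le
    _ = a * log (a / x) := by field_simp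

lemma sub_lt_mul_log_div {a x : ℝ} (ha : 0 ≤ a) (hx : 0 < x) (hax : a ≠ x) :
    a - x < a * log (a / x) :=
  calc a - x = x * (a / x - 1) := by field_simp
    _ < x * (a / x * log (a / x)) :=
      mul_lt_mul_of_pos_left (self_sub_one_lt_mul_log (div_nonneg ha hx.le)
        ((div_eq_one_iff_eq hx.ne').not.mpr hax)) hx
    _ = a * log (a / x) := by field_simp

/-- The term `gᵢ` above, for `pᵢ = P` and `qᵢ = Q`. -/
noncomputable def polyaTerm (t P Q : ℝ) : ℝ :=
  t * (P * log (P / (Q + t * P))) + Q * log (Q / (Q + t * P)) + (Q + t * P) * log (1 + t)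

section polyaTerm

variable {t P Q : ℝ}

lemma polyaTerm_self (t P : ℝ) : polyaTerm t P P = 0 := by
  have hS : P + t * P = (1 + t) * P := by ring
  rcases eq_or_ne P 0 with rfl | hP
  · simp [polyaTerm]
  rcases eq_or_ne (1 + t) 0 with h1t | h1t
  · simp [polyaTerm, hS, h1t]
  rw [polyaTerm, hS, div_mul_cancel_right₀ hP, log_inv]
  ring

lemma polyaTerm_eq_of_pos (h1t : 0 < 1 + t) (hS : 0 < Q + t * P) :
    polyaTerm t P Q = t * (P * log (P / ((Q + t * P) / (1 + t))))
      + Q * log (Q / ((Q + t * P) / (1 + t))) := by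
  have hr : (Q + t * P) / (1 + t) ≠ 0 := (div_pos hS h1t).ne'
  simp only [polyaTerm, mul_log_div _ hS.ne', mul_log_div _ hr, log_div hS.ne' h1t.ne']
  ring

lemma polyaTerm_eq_of_neg (h1t : 0 < 1 + t) (hS : 0 < Q + t * P) (hQ : 0 < Q) :
    polyaTerm t P Q = -(-t * (P * log (P / Q))
      + (Q + t * P) * log ((Q + t * P) / ((1 + t) * Q))) := by
  simp only [polyaTerm, mul_log_div _ hS.ne', mul_log_div _ hQ.ne',
    log_div hS.ne' (mul_pos h1t hQ).ne', log_mul h1t.ne' hQ.ne']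
  ring

lemma polyaTerm_div_pos (ht : t ≠ 0) (h1t : 0 < 1 + t) (hP : 0 ≤ P) (hQ : 0 ≤ Q)
    (hS : 0 < Q + t * P) (hPQ : P ≠ Q) : 0 < polyaTerm t P Q / t := by
  rcases ht.lt_or_gt with ht | ht
  · have hQ : 0 < Q := by nlinarith
    have h1 := mul_lt_mul_of_pos_left (sub_lt_mul_log_div hP hQ hPQ) (neg_pos.mpr ht)
    have h2 := sub_le_mul_log_div hS.le (mul_pos h1t hQ)
    refine div_pos_of_neg_of_neg ?_ ht
    rw [polyaTerm_eq_of_neg h1t hS hQ]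
    nlinarith
  · have hr : 0 < (Q + t * P) / (1 + t) := div_pos hS h1t
    have hPr : P ≠ (Q + t * P) / (1 + t) := by
      rw [ne_eq, eq_div_iff h1t.ne']
      contrapose! hPQ
      linarith
    have h1 := mul_lt_mul_of_pos_left (sub_lt_mul_log_div hP hr hPr) ht
    have h2 := sub_le_mul_log_div hQ hr
    have hsum : t * (P - (Q + t * P) / (1 + t)) + (Q - (Q + t * P) / (1 + t)) = 0 := by
      field_simp
      ring
    refine div_pos ?_ ht
    rw [polyaTerm_eq_of_pos h1t hS]
    linarith

lemma polyaTerm_div_nonneg (ht : t ≠ 0) (hP : 0 ≤ P) (hQ : 0 ≤ Q) (hS : 0 ≤ Q + t * P)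
    (hS1 : Q + t * P ≤ 1 + t) : 0 ≤ polyaTerm t P Q / t := by
  rcases hS.eq_or_lt with hS | hS
  · simp [polyaTerm, ← hS]
  rcases eq_or_ne P Q with rfl | hPQ
  · simp [polyaTerm_self]
  exact (polyaTerm_div_pos ht (hS.trans_le hS1) hP hQ hS hPQ).le

lemma le_of_polyaTerm_div_eq_zero (ht : t ≠ 0) (hP : 0 ≤ P) (hQ : 0 ≤ Q) (hS : 0 ≤ Q + t * P)
    (hS1 : Q + t * P ≤ 1 + t) (h : polyaTerm t P Q / t = 0) : Q ≤ P := by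
  rcases hS.eq_or_lt with hS | hS
  · nlinarith
  by_contra! hQP
  exact (polyaTerm_div_pos ht (hS.trans_le hS1) hP hQ hS hQP.ne).ne' h

end polyaTerm

lemma polyaDiv_eq_sum_polyaTerm_div {m : ℕ} {p q : Fin m → ℝ} {β c : ℝ}
    (ht : β * c ≠ 0) (hS : ∑ i, (q i + β * c * p i) = 1 + β * c) :
    polyaDiv p q β c = ∑ i, polyaTerm (β * c) (p i) (q i) / (β * c) := by
  rw [← sum_div, eq_div_iff ht]
  simp only [polyaDiv, KL, polyaTerm, sum_add_distrib, ← mul_sum, ← sum_mul, hS]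
  generalize β * c = t at ht ⊢
  field_simp
  ring_nf

/-- non-negativity of the Pólya divergence, with equality iff `p = q`. -/
theorem polyaDiv_nonneg_and_eq_zero_iff {m : ℕ} (p q : Fin m → ℝ) (β c : ℝ)
    (hp : p ∈ probSimplex m) (hq : q ∈ probSimplex m)
    (hβ : β ∈ Set.Ioo (0 : ℝ) 1) (hc : c ≠ 0)
    (hdom : ∀ i, 0 ≤ q i + β * c * p i) :
    0 ≤ polyaDiv p q β c ∧ (polyaDiv p q β c = 0 ↔ p = q) := by
  obtain ⟨hp0, hp1⟩ := hp
  obtain ⟨hq0, hq1⟩ := hq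
  have ht : β * c ≠ 0 := mul_ne_zero hβ.1.ne' hc
  have hS : ∑ i, (q i + β * c * p i) = 1 + β * c := by
    rw [sum_add_distrib, ← mul_sum, hp1, hq1]
    ring
  have hS1 (i : Fin m) : q i + β * c * p i ≤ 1 + β * c :=
    hS ▸ single_le_sum (fun j _ => hdom j) (mem_univ i)
  have hterm (i : Fin m) : 0 ≤ polyaTerm (β * c) (p i) (q i) / (β * c) :=
    polyaTerm_div_nonneg ht (hp0 i) (hq0 i) (hdom i) (hS1 i)
  rw [polyaDiv_eq_sum_polyaTerm_div ht hS]
  refine ⟨sum_nonneg fun i _ => hterm i, fun hzero => ?_, ?_⟩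
  · have hle (i : Fin m) (_ : i ∈ univ) : q i ≤ p i :=
      le_of_polyaTerm_div_eq_zero ht (hp0 i) (hq0 i) (hdom i) (hS1 i)
        ((sum_eq_zero_iff_of_nonneg fun j _ => hterm j).mp hzero i (mem_univ i))
    funext i
    exact ((sum_eq_sum_iff_of_le hle).mp (hq1.trans hp1.symm) i (mem_univ i)).symm
  · rintro rfl
    simp [polyaTerm_self]
end

section
/- The Pólya divergence I(p‖q;β,c) converges to the Kullback-Leibler divergence I(p‖q) as c → 0 (for fixed p, q with q_i > 0 for all i and fixed β ∈ (0,1)). -/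
/-!
The Pólya divergence depends on `β` and `c` only through `t = βc`, and equals
`KL p (q + t p) + t⁻¹ KL q (q + t p) + t⁻¹ (1 + t) log (1 + t)`. The first term is continuous
in `t`. Since `KL q q = 0`, the second is a difference quotient of `t ↦ KL q (q + t p)` at `0`,
whose derivative there is `-∑ pᵢ = -1`; likewise the third tends to `log' 1 = 1`. The two limits
cancel.
-/

open Real Finset Filter Topology

@[simp]
theorem KL_self {m : ℕ} (a : Fin m → ℝ) : KL a a = 0 := by
  simp [KL]

theorem continuousAt_KL_right {m : ℕ} (a : Fin m → ℝ) {b : Fin m → ℝ} (hb : ∀ i, b i ≠ 0) :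
    ContinuousAt (KL a) b := by
  show ContinuousAt (fun b : Fin m → ℝ => ∑ i, a i * log (a i / b i)) b
  refine tendsto_finsetSum _ fun i _ => ?_
  rcases eq_or_ne (a i) 0 with ha | ha
  · simp only [ha, zero_mul]
    exact continuousAt_const
  · exact continuousAt_const.mul <|
      (continuousAt_const.div (continuous_apply i).continuousAt (hb i)).log (div_ne_zero ha (hb i))

theorem hasDerivAt_mul_log_div_add_mul {x : ℝ} (d : ℝ) (hx : x ≠ 0) :
    HasDerivAt (fun t => x * log (x / (x + t * d))) (-d) 0 := by
  have hline : HasDerivAt (fun t => x + t * d) d 0 := by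
    simpa using ((hasDerivAt_id (0 : ℝ)).mul_const d).const_add x
  refine ((((hasDerivAt_const 0 x).fun_div hline (by simpa using hx)).log
    (by simpa using hx)).const_mul x).congr_deriv ?_
  simp [field]

theorem hasDerivAt_KL_self_add_mul {m : ℕ} {b : Fin m → ℝ} (d : Fin m → ℝ) (hb : ∀ i, b i ≠ 0) :
    HasDerivAt (fun t => KL b (fun i => b i + t * d i)) (-∑ i, d i) 0 := by
  rw [← Finset.sum_neg_distrib]
  exact HasDerivAt.fun_sum fun i _ => hasDerivAt_mul_log_div_add_mul (d i) (hb i)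

theorem tendsto_KL_self_add_mul_div {m : ℕ} {b : Fin m → ℝ} (d : Fin m → ℝ) (hb : ∀ i, b i ≠ 0) :
    Tendsto (fun t => (1 / t) * KL b (fun i => b i + t * d i)) (𝓝[≠] 0) (𝓝 (-∑ i, d i)) := by
  simpa using (hasDerivAt_KL_self_add_mul d hb).tendsto_slope_zero

theorem tendsto_one_add_div_mul_log_one_add :
    Tendsto (fun t : ℝ => ((1 + t) / t) * log (1 + t)) (𝓝[≠] 0) (𝓝 1) := by
  have hslope := (hasDerivAt_log one_ne_zero).tendsto_slope_zero
  have hone : Tendsto (fun t : ℝ => 1 + t) (𝓝[≠] 0) (𝓝 1) := by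
    simpa using ((continuous_const_add (1 : ℝ)).tendsto 0).mono_left nhdsWithin_le_nhds
  convert hone.mul hslope using 1
  · ext t; simp [div_eq_mul_inv, mul_assoc]
  · simp

theorem polyaDiv_eq_polyaDiv_one {m : ℕ} (p q : Fin m → ℝ) (β c : ℝ) :
    polyaDiv p q β c = polyaDiv p q 1 (β * c) := by
  simp only [polyaDiv, one_mul]

theorem tendsto_polyaDiv_one {m : ℕ} {p q : Fin m → ℝ} (hp : ∑ i, p i = 1) (hq : ∀ i, q i ≠ 0) :
    Tendsto (polyaDiv p q 1) (𝓝[≠] 0) (𝓝 (KL p q)) := by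
  have hline : Tendsto (fun t : ℝ => fun i => q i + t * p i) (𝓝 0) (𝓝 q) :=
    (by fun_prop : Continuous fun t : ℝ => fun i => q i + t * p i).tendsto' 0 q (by simp)
  have hfirst : Tendsto (fun t => KL p (fun i => q i + t * p i)) (𝓝[≠] 0) (𝓝 (KL p q)) :=
    ((continuousAt_KL_right p hq).tendsto.comp hline).mono_left nhdsWithin_le_nhds
  have hsum := (hfirst.add (tendsto_KL_self_add_mul_div p hq)).add
    tendsto_one_add_div_mul_log_one_add
  rw [hp, neg_add_cancel_right] at hsum
  exact hsum.congr fun t => by simp only [polyaDiv, one_mul]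

theorem polyaDiv_tendsto_KL_general {m : ℕ} (p q : Fin m → ℝ) (β : ℝ)
    (hp : p ∈ probSimplex m)
    (hqpos : ∀ i, 0 < q i) (hβ : β ∈ Set.Ioo (0 : ℝ) 1) :
    Tendsto (fun c => polyaDiv p q β c) (𝓝[≠] 0) (𝓝 (KL p q)) := by
  have hscale : Tendsto (β * ·) (𝓝[≠] (0 : ℝ)) (𝓝[≠] 0) :=
    tendsto_nhdsWithin_iff.2
      ⟨((continuous_const_mul β).tendsto' 0 0 (mul_zero β)).mono_left nhdsWithin_le_nhds,
        eventually_nhdsWithin_of_forall fun _ hc => mul_ne_zero hβ.1.ne' hc⟩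
  exact ((tendsto_polyaDiv_one hp.2 fun i => (hqpos i).ne').comp hscale).congr fun c =>
    (polyaDiv_eq_polyaDiv_one p q β c).symm

/-- the Pólya divergence converges to the KL divergence as `c → 0`. -/
theorem polyaDiv_tendsto_KL {m : ℕ} (p q : Fin m → ℝ) (β : ℝ)
    (hp : p ∈ probSimplex m) (hq : q ∈ probSimplex m)
    (hqpos : ∀ i, 0 < q i) (hβ : β ∈ Set.Ioo (0 : ℝ) 1) :
    Tendsto (fun c => polyaDiv p q β c) (𝓝[≠] 0) (𝓝 (KL p q)) :=
  polyaDiv_tendsto_KL_general p q β hp hqpos hβ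
end

section
/- Form of the Pólya I-projection on a linear family: let Π = {p : Σ_i p_i u_j(x_i) = a_j, j = 0,…,J} with u_0 ≡ 1, a_0 = 1, be nonempty, and suppose p̂(β,c) is an interior minimizer of the Pólya divergence I(·‖q;β,c) over Π. Then there exist Lagrange multipliers λ_0,…,λ_J such that p̂_i(β,c) = q_i·e^{−Σ_{j=0}^J λ_j u_j(x_i)} / (1 − βc·e^{−Σ_{j=0}^J λ_j u_j(x_i)}) for each i. -/
open Real Finset Filter Topology

/-! The minimizer is interior, so moving along any direction `v` orthogonal to all `u j` stays
in the feasible set (the constraint for `u 0 ≡ 1` keeps the total mass equal to `1`). The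
derivative of the Pólya divergence along `v` is `∑ᵢ vᵢ log (p̂ᵢ / (qᵢ + βc p̂ᵢ))`, which must
vanish; a vector orthogonal to everything orthogonal to the `u j` lies in their span, so
`log (p̂ᵢ / (qᵢ + βc p̂ᵢ)) = -∑ⱼ λⱼ uⱼ(xᵢ)`. Solving for `p̂ᵢ` gives the stated form. -/

open Matrix

theorem exists_sum_mul_eq_of_dotProduct_eq_zero {K ι κ : Type*} [Field K] [Fintype ι]
    [Fintype κ] (u : κ → ι → K) (f : ι → K)
    (h : ∀ v : ι → K, (∀ j, v ⬝ᵥ u j = 0) → v ⬝ᵥ f = 0) :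
    ∃ lam : κ → K, ∀ i, ∑ j, lam j * u j i = f i := by
  classical
  by_contra hne
  have hf : f ∉ Submodule.span K (Set.range u) := by
    rw [Submodule.mem_span_range_iff_exists_fun]
    rintro ⟨lam, hlam⟩
    exact hne ⟨lam, fun i => by simpa using congrFun hlam i⟩
  obtain ⟨φ, hφf, hφ⟩ := Submodule.exists_dual_map_eq_bot_of_notMem hf inferInstance
  have hdot : ∀ x, (dotProductEquiv K ι).symm φ ⬝ᵥ x = φ x := fun x =>
    congrArg (· x) ((dotProductEquiv K ι).apply_symm_apply φ)
  refine hφf ?_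
  rw [← hdot]
  refine h _ fun j => ?_
  rw [hdot]
  exact LinearMap.le_ker_iff_map.2 hφ (Submodule.subset_span ⟨j, rfl⟩)

noncomputable def polyaSummand (q b x : ℝ) : ℝ :=
  x * log (x / (q + b * x)) + 1 / b * (q * log (q / (q + b * x)))

theorem polyaDiv_eq_sum {m : ℕ} (p q : Fin m → ℝ) (β c : ℝ) :
    polyaDiv p q β c = ∑ i, polyaSummand (q i) (β * c) (p i)
      + (1 + β * c) / (β * c) * log (1 + β * c) := by
  rw [polyaDiv, KL, KL, mul_sum, ← sum_add_distrib]
  rfl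

theorem hasDerivAt_polyaSummand {q b x : ℝ} (hq : q ≠ 0) (hb : b ≠ 0) (hx : x ≠ 0)
    (hD : q + b * x ≠ 0) :
    HasDerivAt (polyaSummand q b) (log (x / (q + b * x))) x := by
  have hlin : HasDerivAt (fun y => q + b * y) b x := by
    simpa using ((hasDerivAt_id x).const_mul b).const_add q
  have h₁ := ((hasDerivAt_id x).fun_div hlin hD).log (div_ne_zero hx hD)
  have h₂ := ((hasDerivAt_const x q).fun_div hlin hD).log (div_ne_zero hq hD)
  refine (((hasDerivAt_id x).fun_mul h₁).fun_add
    ((h₂.const_mul q).const_mul (1 / b))).congr_deriv ?_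
  simp only [id]
  field_simp
  ring

theorem hasDerivAt_polyaDiv_add_smul {m : ℕ} {p q v : Fin m → ℝ} {β c : ℝ}
    (hp : ∀ i, p i ≠ 0) (hq : ∀ i, q i ≠ 0) (hbc : β * c ≠ 0)
    (hD : ∀ i, q i + β * c * p i ≠ 0) :
    HasDerivAt (fun t : ℝ => polyaDiv (p + t • v) q β c)
      (v ⬝ᵥ fun i => log (p i / (q i + β * c * p i))) 0 := by
  simp only [polyaDiv_eq_sum, Pi.add_apply, Pi.smul_apply, smul_eq_mul]
  refine (HasDerivAt.fun_sum fun i _ => ?_).add_const _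
  have hline : HasDerivAt (fun t : ℝ => p i + t * v i) (v i) 0 := by
    simpa using ((hasDerivAt_id (0 : ℝ)).mul_const (v i)).const_add (p i)
  exact ((hasDerivAt_polyaSummand (hq i) hbc (hp i) (hD i)).comp_of_eq 0 hline
    (by simp)).congr_deriv (mul_comm _ _)

def linearFamily {m : ℕ} {κ : Type*} (u : κ → Fin m → ℝ) (a : κ → ℝ) : Set (Fin m → ℝ) :=
  {p | p ∈ probSimplex m ∧ ∀ j, p ⬝ᵥ u j = a j}

theorem isLocalMin_add_smul_of_isMinOn_linearFamily {m : ℕ} {κ : Type*}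
    {F : (Fin m → ℝ) → ℝ} {u : κ → Fin m → ℝ} {a : κ → ℝ} {j₀ : κ} {p v : Fin m → ℝ}
    (hu : u j₀ = 1) (ha : a j₀ = 1) (hp : ∀ i, 0 < p i) (hcons : ∀ j, p ⬝ᵥ u j = a j)
    (hmin : IsMinOn F (linearFamily u a) p) (hv : ∀ j, v ⬝ᵥ u j = 0) :
    IsLocalMin (fun t : ℝ => F (p + t • v)) 0 := by
  have hpos : ∀ᶠ t : ℝ in 𝓝 0, ∀ i, 0 < p i + t * v i :=
    eventually_all.2 fun i =>
      continuousAt_const.eventually_lt (by fun_prop) (by simpa using hp i)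
  filter_upwards [hpos] with t ht
  have hcons' : ∀ j, (p + t • v) ⬝ᵥ u j = a j := fun j => by
    rw [add_dotProduct, smul_dotProduct, hv, hcons, smul_zero, add_zero]
  have hsimplex : p + t • v ∈ probSimplex m := by
    refine ⟨fun i => (ht i).le, ?_⟩
    simpa [hu, ha, dotProduct] using hcons' j₀
  simpa using hmin ⟨hsimplex, hcons'⟩

theorem eq_mul_div_one_sub_mul_div {q b x : ℝ} (hq : q ≠ 0) (hD : q + b * x ≠ 0) :
    x = q * (x / (q + b * x)) / (1 - b * (x / (q + b * x))) := by
  have : 1 - b * (x / (q + b * x)) = q / (q + b * x) := by field_simp; ring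
  rw [this, mul_div_assoc, div_div_div_cancel_right₀ hD]
  field_simp

theorem polya_Iprojection_linear_family_general {m J : ℕ} (q : Fin m → ℝ) (β c : ℝ)
    (u : Fin (J + 1) → Fin m → ℝ) (a : Fin (J + 1) → ℝ) (phat : Fin m → ℝ)
    (hqpos : ∀ i, 0 < q i)
    (hβ : β ∈ Set.Ioo (0 : ℝ) 1) (hc : c ≠ 0)
    (hu0 : ∀ i, u 0 i = 1) (ha0 : a 0 = 1)
    (hcons : ∀ j, ∑ i, phat i * u j i = a j)
    (hint : ∀ i, 0 < phat i) (hdom : ∀ i, 0 < q i + β * c * phat i)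
    (hmin : ∀ p ∈ probSimplex m, (∀ j, ∑ i, p i * u j i = a j) →
      polyaDiv phat q β c ≤ polyaDiv p q β c) :
    ∃ lam : Fin (J + 1) → ℝ, ∀ i,
      phat i = q i * Real.exp (-∑ j, lam j * u j i) /
        (1 - β * c * Real.exp (-∑ j, lam j * u j i)) := by
  have hbc : β * c ≠ 0 := mul_ne_zero hβ.1.ne' hc
  have hminOn : IsMinOn (polyaDiv · q β c) (linearFamily u a) phat := fun p hp =>
    hmin p hp.1 hp.2
  have hstationary : ∀ v : Fin m → ℝ, (∀ j, v ⬝ᵥ u j = 0) →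
      v ⬝ᵥ (fun i => log (phat i / (q i + β * c * phat i))) = 0 := fun v hv =>
    (isLocalMin_add_smul_of_isMinOn_linearFamily (funext hu0) ha0 hint hcons hminOn
      hv).hasDerivAt_eq_zero (hasDerivAt_polyaDiv_add_smul (fun i => (hint i).ne')
        (fun i => (hqpos i).ne') hbc (fun i => (hdom i).ne'))
  obtain ⟨lam, hlam⟩ := exists_sum_mul_eq_of_dotProduct_eq_zero u _ hstationary
  refine ⟨-lam, fun i => ?_⟩
  simp only [Pi.neg_apply, neg_mul, sum_neg_distrib, neg_neg, hlam,
    exp_log (div_pos (hint i) (hdom i))]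
  exact eq_mul_div_one_sub_mul_div (hqpos i).ne' (hdom i).ne'

/-- implicit exponential form of the Pólya I-projection of `q` on a
linear family `{p : ∑ᵢ pᵢ·uⱼ(xᵢ) = aⱼ, j = 0,…,J}` (with `u₀ ≡ 1`, `a₀ = 1`),
when the minimizer `phat` is interior. -/
theorem polya_Iprojection_linear_family {m J : ℕ} (q : Fin m → ℝ) (β c : ℝ)
    (u : Fin (J + 1) → Fin m → ℝ) (a : Fin (J + 1) → ℝ) (phat : Fin m → ℝ)
    (hq : q ∈ probSimplex m) (hqpos : ∀ i, 0 < q i)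
    (hβ : β ∈ Set.Ioo (0 : ℝ) 1) (hc : c ≠ 0)
    (hu0 : ∀ i, u 0 i = 1) (ha0 : a 0 = 1)
    (hmem : phat ∈ probSimplex m) (hcons : ∀ j, ∑ i, phat i * u j i = a j)
    (hint : ∀ i, 0 < phat i) (hdom : ∀ i, 0 < q i + β * c * phat i)
    (hmin : ∀ p ∈ probSimplex m, (∀ j, ∑ i, p i * u j i = a j) →
      polyaDiv phat q β c ≤ polyaDiv p q β c) :
    ∃ lam : Fin (J + 1) → ℝ, ∀ i,
      phat i = q i * Real.exp (-∑ j, lam j * u j i) /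
        (1 - β * c * Real.exp (-∑ j, lam j * u j i)) :=
  polya_Iprojection_linear_family_general q β c u a phat hqpos hβ hc hu0 ha0 hcons hint hdom hmin
end
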